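/- Let Ψ = (ψ_k)_{k∈ℕ} be a sequence with ψ_k ∈ (−π/2, π/2), set F_n := i·tan(ψ_{|n|}) for n ∈ ℤ, and for d ≥ 1 let (a,b) be the SU(2) nonlinear Fourier series of the truncated sequence (F_n · 1_{−d ≤ n ≤ d}). Then for every x ∈ [0,1], with θ ∈ [0, π/2] the unique number with cos θ = x and z := e^(2iθ): i · Im(u_d(Ψ,x)) = b(z). In particular b(z) is purely imaginary for z on the unit circle. -/

import Mathlib

open MeasureTheory Filter

noncomputable section

/-- The Pauli matrix `Z`. -/
def Zmat : Matrix (Fin 2) (Fin 2) ℂ := !![1, 0; 0, -1]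

/-- The matrix `W(x) = [[x, i√(1-x²)],[i√(1-x²), x]]`. -/
def Wmat (x : ℝ) : Matrix (Fin 2) (Fin 2) ℂ :=
  !![(x : ℂ), Complex.I * Real.sqrt (1 - x ^ 2); Complex.I * Real.sqrt (1 - x ^ 2), (x : ℂ)]

/-- The QSP recursion: `U_0 = e^{iψ₀Z}` and
`U_d = e^{iψ_d Z} W(x) U_{d-1} W(x) e^{iψ_d Z}`. -/
def Umat (ψ : ℕ → ℝ) (x : ℝ) : ℕ → Matrix (Fin 2) (Fin 2) ℂ
  | 0 => NormedSpace.exp ((Complex.I * (ψ 0 : ℂ)) • Zmat)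
  | d + 1 =>
      NormedSpace.exp ((Complex.I * (ψ (d + 1) : ℂ)) • Zmat) * Wmat x * Umat ψ x d *
        Wmat x * NormedSpace.exp ((Complex.I * (ψ (d + 1) : ℂ)) • Zmat)

/-- `u_d(Ψ,x)`: the upper left entry of `U_d(Ψ,x)`. -/
def uQSP (ψ : ℕ → ℝ) (x : ℝ) (d : ℕ) : ℂ := Umat ψ x d 0 0

/-- The Hilbert space norm `‖g‖ = ((2/π) ∫₀¹ |g(x)|² dx/√(1-x²))^{1/2}`. -/
def qspNorm (g : ℝ → ℝ) : ℝ :=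
  Real.sqrt ((2 / Real.pi) * ∫ x in (0:ℝ)..1, g x ^ 2 / Real.sqrt (1 - x ^ 2))

/-- The phase sequence `ψ` represents the signal `f`: all phases lie in `(-π/2,π/2)`,
the Plancherel identity `∑_{k∈ℤ} log(1+tan²ψ_{|k|}) = -(2/π)∫₀¹ log(1-f(x)²) dx/√(1-x²)`
holds, and `Im u_d(Ψ,·) → f` in the Hilbert space norm as `d → ∞`. -/
def QSPRepresents (f : ℝ → ℝ) (ψ : ℕ → ℝ) : Prop :=
  (∀ k, ψ k ∈ Set.Ioo (-(Real.pi / 2)) (Real.pi / 2)) ∧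
  Summable (fun k : ℕ => Real.log (1 + Real.tan (ψ (k + 1)) ^ 2)) ∧
  Real.log (1 + Real.tan (ψ 0) ^ 2) +
      2 * ∑' k : ℕ, Real.log (1 + Real.tan (ψ (k + 1)) ^ 2) =
    -(2 / Real.pi) * ∫ x in (0:ℝ)..1, Real.log (1 - f x ^ 2) / Real.sqrt (1 - x ^ 2) ∧
  Tendsto (fun d : ℕ => qspNorm (fun x => (uQSP ψ x d).im - f x)) atTop (nhds 0)

/-- The SU(2) NLFT factor `(1+|F n|²)^{-1/2} · [[1, F n zⁿ],[−conj(F n) z⁻ⁿ, 1]]`. -/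
def nlftFactor (F : ℤ → ℂ) (n : ℤ) (z : ℂ) : Matrix (Fin 2) (Fin 2) ℂ :=
  (((Real.sqrt (1 + ‖F n‖ ^ 2))⁻¹ : ℝ) : ℂ) •
    !![1, F n * z ^ n; -(starRingEnd ℂ (F n)) * z ^ (-n), 1]

/-- Ordered product of the NLFT factors for `-K ≤ n ≤ K`. -/
def nlftPartial (F : ℤ → ℂ) (K : ℕ) (z : ℂ) : Matrix (Fin 2) (Fin 2) ℂ :=
  (((List.range (2 * K + 1)).map (fun j => nlftFactor F ((j : ℤ) - (K : ℤ)) z)).prod)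

open Classical in
/-- A bound for the support of a finitely supported sequence. -/
def suppBound (F : ℤ → ℂ) : ℕ :=
  if h : (Function.support F).Finite then h.toFinset.sup (fun n => n.natAbs) else 0

/-- The SU(2) nonlinear Fourier series of a finitely supported sequence `F : ℤ → ℂ`,
evaluated at `z`: the ordered product over increasing `n` of the factors
`(1+|F n|²)^{-1/2} · [[1, F n zⁿ],[−conj(F n) z⁻ⁿ, 1]]`. -/
def nlft (F : ℤ → ℂ) (z : ℂ) : Matrix (Fin 2) (Fin 2) ℂ := nlftPartial F (suppBound F) z

/-- First entry `a(z)` of the nonlinear Fourier series. -/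
def nlftA (F : ℤ → ℂ) (z : ℂ) : ℂ := nlft F z 0 0

/-- Second entry `b(z)` of the nonlinear Fourier series. -/
def nlftB (F : ℤ → ℂ) (z : ℂ) : ℂ := nlft F z 0 1

/-!
Put `ζ = e^{iθ}`, `z = ζ²`, `X = [[0,1],[1,0]]`. The NLFT factor of `Fₙ = i tan ψ` at `z` is
`e^{inθZ} e^{iψX} e^{-inθZ}`, so the conjugated partial products
`Q_d = e^{idθZ} P_d e^{idθZ}` obey `Q_d = e^{iψ_d X} e^{iθZ} Q_{d-1} e^{iθZ} e^{iψ_d X}`.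
Conjugation by the Hadamard matrix `H` swaps `X` and `Z`, and `W(cos θ) = e^{iθX}`, so it turns
the QSP recursion into this one: `H U_d H⁻¹ = Q_d`. Hence
`b(z) = (P_d)₀₁ = (Q_d)₀₁ = (H U_d H⁻¹)₀₁`, and since `U_d` is symmetric and of the form
`[[u, v], [-v̄, ū]]`, this entry is `(u - ū)/2 = i Im u`.
-/

section

open Complex Matrix

/-- `e^{itZ}`. -/
def phaseMat (t : ℝ) : Matrix (Fin 2) (Fin 2) ℂ :=
  diagonal ![exp (t * I), exp (-t * I)]

/-- `e^{itX}`. -/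
def rotMat (t : ℝ) : Matrix (Fin 2) (Fin 2) ℂ :=
  !![(Real.cos t : ℂ), I * Real.sin t; I * Real.sin t, (Real.cos t : ℂ)]

def Hmat : Matrix (Fin 2) (Fin 2) ℂ := !![1, 1; 1, -1]

def Jmat : Matrix (Fin 2) (Fin 2) ℂ := !![0, 1; -1, 0]

lemma exp_smul_Zmat (t : ℝ) : NormedSpace.exp ((I * t) • Zmat) = phaseMat t := by
  have hZ : Zmat = diagonal ![1, -1] := by
    ext i j; fin_cases i <;> fin_cases j <;> simp [Zmat]
  rw [hZ, ← diagonal_smul, exp_diagonal, phaseMat]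
  congr 1
  ext i; fin_cases i <;> simp [← Complex.exp_eq_exp_ℂ, mul_comm]

lemma phaseMat_add (s t : ℝ) : phaseMat (s + t) = phaseMat s * phaseMat t := by
  simp only [phaseMat, diagonal_mul_diagonal]
  congr 1
  ext i; fin_cases i <;> simp [← Complex.exp_add] <;> ring_nf

lemma phaseMat_zero : phaseMat 0 = 1 := by
  simp [phaseMat, ← diagonal_one]

lemma phaseMat_mul_phaseMat_neg (t : ℝ) : phaseMat t * phaseMat (-t) = 1 := by
  rw [← phaseMat_add, add_neg_cancel, phaseMat_zero]

lemma phaseMat_neg_mul_phaseMat (t : ℝ) : phaseMat (-t) * phaseMat t = 1 := by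
  rw [← phaseMat_add, neg_add_cancel, phaseMat_zero]

lemma phaseMat_eq (t : ℝ) : phaseMat t =
    !![(Real.cos t : ℂ) + Real.sin t * I, 0; 0, (Real.cos t : ℂ) - Real.sin t * I] := by
  ext i j; fin_cases i <;> fin_cases j <;>
    simp [phaseMat, exp_mul_I, ← neg_mul, sub_eq_add_neg]

lemma phaseMat_mul_mul_phaseMat_apply_zero_one (t : ℝ) (M : Matrix (Fin 2) (Fin 2) ℂ) :
    (phaseMat t * M * phaseMat t) 0 1 = M 0 1 := by
  have h : exp (t * I) * exp (-(t * I)) = 1 := by rw [← exp_add, add_neg_cancel, exp_zero]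
  simp [phaseMat, diagonal_mul, mul_diagonal]
  linear_combination M 0 1 * h

lemma Wmat_cos {θ : ℝ} (h0 : 0 ≤ θ) (hπ : θ ≤ Real.pi) : Wmat (Real.cos θ) = rotMat θ := by
  rw [Wmat, rotMat, ← Real.sin_sq, Real.sqrt_sq (Real.sin_nonneg_of_nonneg_of_le_pi h0 hπ)]

lemma Hmat_mul_phaseMat (t : ℝ) : Hmat * phaseMat t = rotMat t * Hmat := by
  rw [phaseMat_eq, Hmat, rotMat]
  ext i j; fin_cases i <;> fin_cases j <;> simp <;> ring

lemma Hmat_mul_rotMat (t : ℝ) : Hmat * rotMat t = phaseMat t * Hmat := by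
  rw [phaseMat_eq, Hmat, rotMat]
  ext i j; fin_cases i <;> fin_cases j <;> simp <;> ring

lemma Hmat_mul_mul {A A' B B' : Matrix (Fin 2) (Fin 2) ℂ} (hA : Hmat * A = A' * Hmat)
    (hB : Hmat * B = B' * Hmat) : Hmat * (A * B) = A' * B' * Hmat := by
  rw [← Matrix.mul_assoc, hA, Matrix.mul_assoc, hB, Matrix.mul_assoc]

lemma two_mul_apply_zero_one_of_Hmat_mul {M Q : Matrix (Fin 2) (Fin 2) ℂ}
    (h : Hmat * M = Q * Hmat) : 2 * Q 0 1 = M 0 0 - M 0 1 + M 1 0 - M 1 1 := by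
  have h00 := congrFun (congrFun h 0) 0
  have h01 := congrFun (congrFun h 0) 1
  simp [Hmat, mul_apply, Fin.sum_univ_two] at h00 h01
  linear_combination h01 - h00

lemma Wmat_transpose (x : ℝ) : (Wmat x)ᵀ = Wmat x := by
  ext i j; fin_cases i <;> fin_cases j <;> rfl

lemma Umat_transpose (ψ : ℕ → ℝ) (x : ℝ) (d : ℕ) : (Umat ψ x d)ᵀ = Umat ψ x d := by
  induction d with
  | zero => rw [Umat, exp_smul_Zmat, phaseMat, diagonal_transpose]
  | succ d ih =>
    rw [Umat, exp_smul_Zmat]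
    simp only [transpose_mul, ih, Wmat_transpose, phaseMat, diagonal_transpose, Matrix.mul_assoc]

/-- The matrices of the form `[[a, b], [-b̄, ā]]` (real multiples of `SU(2)` matrices). -/
def quaternionSubmonoid : Submonoid (Matrix (Fin 2) (Fin 2) ℂ) where
  carrier := {M | M * Jmat = Jmat * M.map (starRingEnd ℂ)}
  mul_mem' {A B} hA hB := by
    simp only [Set.mem_ofPred_eq, Matrix.map_mul] at *
    rw [Matrix.mul_assoc, hB, ← Matrix.mul_assoc, hA, Matrix.mul_assoc]
  one_mem' := by simp

lemma apply_one_one_of_mem_quaternionSubmonoid {M : Matrix (Fin 2) (Fin 2) ℂ}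
    (hM : M ∈ quaternionSubmonoid) : M 1 1 = starRingEnd ℂ (M 0 0) := by
  have h := congrFun (congrFun hM 1) 0
  simpa [Jmat, mul_apply, Fin.sum_univ_two] using h

lemma phaseMat_mem_quaternionSubmonoid (t : ℝ) : phaseMat t ∈ quaternionSubmonoid := by
  show _ = _
  rw [phaseMat_eq, Jmat]
  ext i j; fin_cases i <;> fin_cases j <;>
    simp [mul_apply, Fin.sum_univ_two, -Complex.ofReal_cos, -Complex.ofReal_sin, sub_eq_add_neg]

lemma Wmat_mem_quaternionSubmonoid (x : ℝ) : Wmat x ∈ quaternionSubmonoid := by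
  show _ = _
  ext i j; fin_cases i <;> fin_cases j <;> simp [Wmat, Jmat, mul_apply, Fin.sum_univ_two]

lemma Umat_mem_quaternionSubmonoid (ψ : ℕ → ℝ) (x : ℝ) (d : ℕ) :
    Umat ψ x d ∈ quaternionSubmonoid := by
  induction d with
  | zero => rw [Umat, exp_smul_Zmat]; exact phaseMat_mem_quaternionSubmonoid _
  | succ d ih =>
    rw [Umat, exp_smul_Zmat]
    have hE := phaseMat_mem_quaternionSubmonoid (ψ (d + 1))
    have hW := Wmat_mem_quaternionSubmonoid x
    exact mul_mem (mul_mem (mul_mem (mul_mem hE hW) ih) hW) hE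

-- In `nlftPartial` the list `List.range (2 * K + 1)` is coerced to `List ℤ` by `List.flatMap`.
lemma nlftPartial_eq_prod_range (F : ℤ → ℂ) (K : ℕ) (z : ℂ) : nlftPartial F K z
      = ((List.range (2 * K + 1)).map fun j : ℕ => nlftFactor F (j - K) z).prod := by
  simp [nlftPartial, ← List.map_eq_flatMap, Function.comp_def]

lemma nlftPartial_zero (F : ℤ → ℂ) (z : ℂ) : nlftPartial F 0 z = nlftFactor F 0 z := by
  simp [nlftPartial_eq_prod_range]

lemma nlftPartial_succ (F : ℤ → ℂ) (K : ℕ) (z : ℂ) :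
    nlftPartial F (K + 1) z =
      nlftFactor F (-(K + 1 : ℕ)) z * nlftPartial F K z * nlftFactor F (K + 1 : ℕ) z := by
  rw [nlftPartial_eq_prod_range, nlftPartial_eq_prod_range,
    show 2 * (K + 1) + 1 = 2 * K + 2 + 1 by ring, List.range_succ, List.range_succ_eq_map]
  simp only [List.map_cons, List.map_append, List.map_map, List.prod_cons, List.prod_append,
    List.map_nil, List.prod_nil, mul_one, Function.comp_def, mul_assoc]
  push_cast
  ring_nf

lemma nlftFactor_of_eq_zero {F : ℤ → ℂ} {n : ℤ} (z : ℂ) (h : F n = 0) :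
    nlftFactor F n z = 1 := by
  simp [nlftFactor, h, one_fin_two]

lemma nlftPartial_eq_of_le {F : ℤ → ℂ} {K L : ℕ} (hKL : K ≤ L)
    (hF : ∀ n : ℤ, K < n.natAbs → F n = 0) (z : ℂ) : nlftPartial F L z = nlftPartial F K z := by
  induction L, hKL using Nat.le_induction with
  | base => rfl
  | succ L hKL ih =>
    rw [nlftPartial_succ, ih, nlftFactor_of_eq_zero, nlftFactor_of_eq_zero, Matrix.one_mul,
      Matrix.mul_one] <;> apply hF <;> omega

lemma eq_zero_of_suppBound_lt {F : ℤ → ℂ} (hF : (Function.support F).Finite) {n : ℤ}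
    (hn : suppBound F < n.natAbs) : F n = 0 := by
  by_contra h
  rw [suppBound, dif_pos hF] at hn
  exact hn.not_ge (Finset.le_sup (f := Int.natAbs) (hF.mem_toFinset.mpr h))

lemma nlft_eq_nlftPartial {F : ℤ → ℂ} {K : ℕ} (hF : ∀ n : ℤ, K < n.natAbs → F n = 0) (z : ℂ) :
    nlft F z = nlftPartial F K z := by
  have hfin : (Function.support F).Finite := by
    refine (Set.finite_Icc (-(K : ℤ)) K).subset fun n hn => ?_
    by_contra hn'
    exact hn (hF n (by rw [Set.mem_Icc] at hn'; omega))
  rw [nlft, ← nlftPartial_eq_of_le (le_max_left _ K) (fun n hn => eq_zero_of_suppBound_lt hfin hn),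
    nlftPartial_eq_of_le (le_max_right _ _) hF]

lemma nlftFactor_eq {F : ℤ → ℂ} {n : ℤ} {ψ : ℝ} (hψ : 0 < Real.cos ψ)
    (hF : F n = I * Real.tan ψ) (θ : ℝ) :
    nlftFactor F n (exp (2 * I * θ)) = phaseMat (n * θ) * rotMat ψ * phaseMat (-(n * θ)) := by
  have hnorm : ‖F n‖ ^ 2 = Real.tan ψ ^ 2 := by simp [hF, -Complex.ofReal_tan]
  have hsin : (Real.cos ψ : ℂ) * Real.tan ψ = Real.sin ψ := by
    rw [mul_comm]; exact_mod_cast Real.tan_mul_cos hψ.ne'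
  have hinv : exp (n * θ * I) * exp (-(n * θ * I)) = 1 := by
    rw [← exp_add, add_neg_cancel, exp_zero]
  have hsq : exp (n * θ * I) * exp (n * θ * I) = exp (n * (2 * I * θ)) := by
    rw [← exp_add]; ring_nf
  have hsq' : exp (-(n * θ * I)) * exp (-(n * θ * I)) = exp (-(n * (2 * I * θ))) := by
    rw [← exp_add]; ring_nf
  rw [nlftFactor, hnorm, Real.inv_sqrt_one_add_tan_sq hψ, phaseMat, phaseMat, rotMat, hF,
    ← exp_int_mul, ← exp_int_mul]
  ext i j; fin_cases i <;> fin_cases j <;>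
    simp [diagonal_mul, mul_diagonal, -Complex.ofReal_cos, -Complex.ofReal_sin,
      -Complex.ofReal_tan]
  · linear_combination (-(Real.cos ψ : ℂ)) * hinv
  · linear_combination (I * exp (n * (2 * I * θ))) * hsin - I * Real.sin ψ * hsq
  · linear_combination (I * exp (-(n * (2 * I * θ)))) * hsin - I * Real.sin ψ * hsq'
  · linear_combination (-(Real.cos ψ : ℂ)) * hinv

lemma phaseMat_mul_nlftFactor_neg {F : ℤ → ℂ} {n : ℤ} {ψ : ℝ} (hψ : 0 < Real.cos ψ)
    (hF : F (-n) = I * Real.tan ψ) (θ : ℝ) :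
    phaseMat (n * θ) * nlftFactor F (-n) (exp (2 * I * θ)) = rotMat ψ * phaseMat (n * θ) := by
  rw [nlftFactor_eq hψ hF, Int.cast_neg, neg_mul, neg_neg, ← Matrix.mul_assoc,
    ← Matrix.mul_assoc, phaseMat_mul_phaseMat_neg, Matrix.one_mul]

lemma nlftFactor_mul_phaseMat {F : ℤ → ℂ} {n : ℤ} {ψ : ℝ} (hψ : 0 < Real.cos ψ)
    (hF : F n = I * Real.tan ψ) (θ : ℝ) :
    nlftFactor F n (exp (2 * I * θ)) * phaseMat (n * θ) = phaseMat (n * θ) * rotMat ψ := by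
  rw [nlftFactor_eq hψ hF, Matrix.mul_assoc, phaseMat_neg_mul_phaseMat, Matrix.mul_one]

lemma phaseMat_mul_nlftPartial_succ {F : ℤ → ℂ} {K : ℕ} {ψ : ℝ} (hψ : 0 < Real.cos ψ)
    (hneg : F (-(K + 1 : ℕ)) = I * Real.tan ψ) (hpos : F (K + 1 : ℕ) = I * Real.tan ψ)
    (θ : ℝ) :
    phaseMat ((K + 1 : ℕ) * θ) * nlftPartial F (K + 1) (exp (2 * I * θ)) *
        phaseMat ((K + 1 : ℕ) * θ) =
      rotMat ψ * phaseMat θ * (phaseMat (K * θ) * nlftPartial F K (exp (2 * I * θ)) *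
        phaseMat (K * θ)) * phaseMat θ * rotMat ψ := by
  have hleft : phaseMat ((K + 1 : ℕ) * θ) = phaseMat θ * phaseMat (K * θ) := by
    rw [← phaseMat_add]; push_cast; ring_nf
  have hright : phaseMat ((K + 1 : ℕ) * θ) = phaseMat (K * θ) * phaseMat θ := by
    rw [← phaseMat_add]; push_cast; ring_nf
  have hfneg := phaseMat_mul_nlftFactor_neg hψ hneg θ
  have hfpos := nlftFactor_mul_phaseMat hψ hpos θ
  rw [Int.cast_natCast] at hfneg hfpos
  calc _ = phaseMat ((K + 1 : ℕ) * θ) * nlftFactor F (-(K + 1 : ℕ)) (exp (2 * I * θ)) *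
          nlftPartial F K (exp (2 * I * θ)) *
          (nlftFactor F (K + 1 : ℕ) (exp (2 * I * θ)) * phaseMat ((K + 1 : ℕ) * θ)) := by
        rw [nlftPartial_succ]; simp only [Matrix.mul_assoc]
    _ = _ := by
        rw [hfneg, hfpos]; nth_rw 1 [hleft]; rw [hright]; simp only [Matrix.mul_assoc]

lemma Hmat_mul_Umat {ψ : ℕ → ℝ} (hψ : ∀ k, 0 < Real.cos (ψ k)) {θ : ℝ} (h0 : 0 ≤ θ)
    (hπ : θ ≤ Real.pi) {F : ℤ → ℂ} (d : ℕ)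
    (hF : ∀ n : ℤ, n.natAbs ≤ d → F n = I * Real.tan (ψ n.natAbs)) :
    Hmat * Umat ψ (Real.cos θ) d =
      phaseMat (d * θ) * nlftPartial F d (exp (2 * I * θ)) * phaseMat (d * θ) * Hmat := by
  induction d with
  | zero =>
    rw [Umat, exp_smul_Zmat, Hmat_mul_phaseMat, nlftPartial_zero,
      nlftFactor_eq (hψ 0) (hF 0 le_rfl)]
    simp [phaseMat_zero]
  | succ d ih =>
    have hU := ih fun n hn => hF n (by omega)
    have hE := Hmat_mul_phaseMat (ψ (d + 1))
    have hW := Hmat_mul_rotMat θ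
    rw [Umat, exp_smul_Zmat, Wmat_cos h0 hπ,
      phaseMat_mul_nlftPartial_succ (hψ (d + 1)) (hF _ (by omega)) (hF _ (by omega))]
    exact Hmat_mul_mul (Hmat_mul_mul (Hmat_mul_mul (Hmat_mul_mul hE hW) hU) hW) hE

lemma nlftPartial_apply_zero_one {ψ : ℕ → ℝ} (hψ : ∀ k, 0 < Real.cos (ψ k)) {θ : ℝ}
    (h0 : 0 ≤ θ) (hπ : θ ≤ Real.pi) {F : ℤ → ℂ} (d : ℕ)
    (hF : ∀ n : ℤ, n.natAbs ≤ d → F n = I * Real.tan (ψ n.natAbs)) :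
    nlftPartial F d (exp (2 * I * θ)) 0 1 = I * (uQSP ψ (Real.cos θ) d).im := by
  have h := two_mul_apply_zero_one_of_Hmat_mul (Hmat_mul_Umat hψ h0 hπ d hF)
  have hsymm := congrFun (congrFun (Umat_transpose ψ (Real.cos θ) d) 0) 1
  rw [phaseMat_mul_mul_phaseMat_apply_zero_one, ← hsymm, transpose_apply,
    apply_one_one_of_mem_quaternionSubmonoid (Umat_mem_quaternionSubmonoid ψ _ d)] at h
  have him := Complex.sub_conj (Umat ψ (Real.cos θ) d 0 0)
  push_cast at him
  rw [uQSP]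
  linear_combination (h + him) / 2

end

theorem qsp_im_eq_b_general (ψ : ℕ → ℝ) (hψ : ∀ k, ψ k ∈ Set.Ioo (-(Real.pi / 2)) (Real.pi / 2))
    (d : ℕ)
    (x : ℝ) (θ : ℝ) (hθ : θ ∈ Set.Icc (0:ℝ) (Real.pi / 2))
    (hcos : Real.cos θ = x) :
    Complex.I * ((uQSP ψ x d).im : ℂ) =
      nlftB (fun n : ℤ => if n.natAbs ≤ d then Complex.I * Real.tan (ψ n.natAbs) else 0)
        (Complex.exp (2 * Complex.I * θ)) ∧
    (nlftB (fun n : ℤ => if n.natAbs ≤ d then Complex.I * Real.tan (ψ n.natAbs) else 0)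
        (Complex.exp (2 * Complex.I * θ))).re = 0 := by
  subst hcos
  have hb : nlftB (fun n : ℤ => if n.natAbs ≤ d then Complex.I * Real.tan (ψ n.natAbs) else 0)
      (Complex.exp (2 * Complex.I * θ)) = Complex.I * (uQSP ψ (Real.cos θ) d).im := by
    rw [nlftB, nlft_eq_nlftPartial (K := d) fun n hn => if_neg hn.not_ge]
    exact nlftPartial_apply_zero_one (fun k => Real.cos_pos_of_mem_Ioo (hψ k)) hθ.1
      (by linarith [hθ.2, Real.pi_pos]) d fun n hn => if_pos hn
  exact ⟨hb.symm, by rw [hb]; simp⟩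

/-- Lemma `upperleft` of the paper: `i Im u_d(Ψ,x) = b(z)` where
`(a,b)` is the nonlinear Fourier series of the truncated sequence `Fₙ = i tan ψ_{|n|}`;
in particular `b(z)` is purely imaginary on the circle. -/
theorem qsp_im_eq_b (ψ : ℕ → ℝ) (hψ : ∀ k, ψ k ∈ Set.Ioo (-(Real.pi / 2)) (Real.pi / 2))
    (d : ℕ) (hd : 1 ≤ d)
    (x : ℝ) (hx : x ∈ Set.Icc (0:ℝ) 1) (θ : ℝ) (hθ : θ ∈ Set.Icc (0:ℝ) (Real.pi / 2))
    (hcos : Real.cos θ = x) :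
    Complex.I * ((uQSP ψ x d).im : ℂ) =
      nlftB (fun n : ℤ => if n.natAbs ≤ d then Complex.I * Real.tan (ψ n.natAbs) else 0)
        (Complex.exp (2 * Complex.I * θ)) ∧
    (nlftB (fun n : ℤ => if n.natAbs ≤ d then Complex.I * Real.tan (ψ n.natAbs) else 0)
        (Complex.exp (2 * Complex.I * θ))).re = 0 :=
  qsp_im_eq_b_general ψ hψ d x θ hθ hcos

end
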